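/- arXiv:2109.05447 — 2 statements merged into one kernel-verified Lean document; each statement's English description precedes it below -/
import Mathlib

section
/- For any real p, the limit as n → ∞ of ln(n) · (1/2 − n (ln n)^p / ((2n+1) (ln(2n+1))^p)) equals (p ln 2)/2. -/
/-!
Write `L = log n`, `M = log (2n + 1)` and `s = (L / M) ^ p`. Since `n / (2n + 1) = 1/2 - 1/(2(2n + 1))`,
the expression equals `L (1 - s) / 2 + s L / (2(2n + 1))`. The second term vanishes because
`log n = o(n)`. For the first, `M - L → log 2` while `L → ∞`, and a first-order expansion of
`t ↦ (1 + t) ^ (-p)` at `0` gives `L (1 - (L / M) ^ p) → p log 2`.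
-/

open Filter Topology

theorem tendsto_mul_one_add_div_rpow_sub_one {α : Type*} {l : Filter α} {x a : α → ℝ} {c : ℝ}
    (q : ℝ) (hx : Tendsto x l atTop) (ha : Tendsto a l (𝓝 c)) :
    Tendsto (fun i => x i * ((1 + a i / x i) ^ q - 1)) l (𝓝 (c * q)) := by
  set f : ℝ → ℝ := fun t => (1 + t) ^ q
  have hf : HasDerivAt f q 0 := by
    simpa [f] using ((hasDerivAt_id (0 : ℝ)).const_add 1).rpow_const (p := q) (by norm_num)
  -- `dslope` rather than `slope`, so that the identity below also holds where `a i = 0`.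
  have hslope : Tendsto (fun i => dslope f 0 (a i / x i)) l (𝓝 q) := by
    rw [← hf.deriv, ← dslope_same]
    exact (continuousAt_dslope_same.mpr hf.differentiableAt).tendsto.comp (ha.div_atTop hx)
  refine (ha.mul hslope).congr' ?_
  filter_upwards [hx.eventually_ne_atTop 0] with i hxi
  calc a i * dslope f 0 (a i / x i)
      = x i * ((a i / x i - 0) • dslope f 0 (a i / x i)) := by
        rw [smul_eq_mul, sub_zero]; field_simp
    _ = x i * (f (a i / x i) - f 0) := by rw [sub_smul_dslope]
    _ = x i * ((1 + a i / x i) ^ q - 1) := by simp [f]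

theorem tendsto_mul_one_sub_div_rpow {α : Type*} {l : Filter α} {x y : α → ℝ} {c : ℝ}
    (p : ℝ) (hx : Tendsto x l atTop) (hxy : Tendsto (fun i => y i - x i) l (𝓝 c)) :
    Tendsto (fun i => x i * (1 - (x i / y i) ^ p)) l (𝓝 (p * c)) := by
  have hy : Tendsto y l atTop := by simpa using hx.atTop_add hxy
  have h := (tendsto_mul_one_add_div_rpow_sub_one (-p) hx hxy).neg
  rw [mul_neg, neg_neg, mul_comm] at h
  refine h.congr' ?_
  filter_upwards [hx.eventually_gt_atTop 0, hy.eventually_gt_atTop 0] with i hxi hyi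
  have hratio : 1 + (y i - x i) / x i = (x i / y i)⁻¹ := by field_simp; ring
  rw [hratio, Real.inv_rpow (by positivity), Real.rpow_neg (by positivity), inv_inv]
  ring

theorem Real.tendsto_log_two_mul_add_one_sub_log :
    Tendsto (fun x : ℝ => Real.log (2 * x + 1) - Real.log x) atTop (𝓝 (Real.log 2)) := by
  have h := (Real.tendsto_log_comp_add_sub_log (1 / 2)).const_add (Real.log 2)
  rw [add_zero] at h
  refine h.congr' ?_
  filter_upwards [eventually_ge_atTop 0] with x hx
  rw [show 2 * x + 1 = 2 * (x + 1 / 2) by ring, Real.log_mul two_ne_zero (by positivity)]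
  ring

theorem log_ratio_limit_odd (p : ℝ) :
    Filter.Tendsto
      (fun n : ℕ => Real.log n *
        (1 / 2 - ((n : ℝ) * (Real.log n) ^ p) /
          ((2 * (n : ℝ) + 1) * (Real.log (2 * (n : ℝ) + 1)) ^ p)))
      Filter.atTop (nhds (p * Real.log 2 / 2)) := by
  have hlog : Tendsto (fun n : ℕ => Real.log n) atTop atTop :=
    Real.tendsto_log_atTop.comp tendsto_natCast_atTop_atTop
  have hmain := tendsto_mul_one_sub_div_rpow p hlog
    (Real.tendsto_log_two_mul_add_one_sub_log.comp tendsto_natCast_atTop_atTop)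
  have hratio : Tendsto (fun n : ℕ => (Real.log n / Real.log (2 * n + 1)) ^ p) atTop (𝓝 1) := by
    have h := (hmain.div_atTop hlog).const_sub 1
    rw [sub_zero] at h
    refine h.congr' ?_
    filter_upwards [hlog.eventually_ne_atTop 0] with n hn
    field_simp
    ring
  have hsmall : Tendsto (fun n : ℕ => Real.log n ^ 1 / (2 * n + 1)) atTop (𝓝 0) :=
    (Real.tendsto_pow_log_div_mul_add_atTop 2 1 1 two_ne_zero).comp tendsto_natCast_atTop_atTop
  have h := (hmain.div_const 2).add ((hratio.mul hsmall).div_const 2)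
  rw [mul_zero, zero_div, add_zero] at h
  refine h.congr' ?_
  filter_upwards [eventually_ge_atTop 1] with n hn
  have hL : 0 ≤ Real.log n := Real.log_nonneg (by exact_mod_cast hn)
  have hM : 0 ≤ Real.log (2 * n + 1) := Real.log_nonneg (by linarith)
  rw [Real.div_rpow hL hM, pow_one]
  field_simp
  ring
end

section
/- Second Raabe's Test (convergence part): Let (a_n) be positive. If liminf_{n→∞} ln(n)·(1/2 − a_{2n}/a_n) > (ln 2)/2 and liminf_{n→∞} ln(n)·(1/2 − a_{2n+1}/a_n) > (ln 2)/2, then ∑ a_n converges. -/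
/-!
Choose `c` strictly between `log 2 / 2` and both liminfs. Eventually
`a (2n) + a (2n+1) ≤ (1 - 2c / log n) a n`, and since `log n ≤ (k + 1) log 2` on the dyadic block
`[2^k, 2^(k+1))`, the block sums `S k` satisfy `S (k+1) ≤ (1 - θ / (k+1)) S k` with
`θ = 2c / log 2 > 1`. By Bernoulli's inequality `S k * k^θ` is then eventually antitone, so
`S k = O(k^(-θ))` is summable, and so is `a`, whose partial sums are dominated by those of `S`.
-/

open Filter Finset

theorem eventually_lt_of_nonneg_lt_liminf {u : ℕ → ℝ} {b : ℝ} (hb : 0 ≤ b)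
    (h : b < liminf u atTop) : ∀ᶠ n in atTop, b < u n := by
  have hbdd : IsBoundedUnder (· ≥ ·) atTop u := by
    by_contra hu
    rw [Real.liminf_of_not_isBoundedUnder hu] at h
    linarith
  exact eventually_lt_of_lt_liminf h hbdd

theorem eventually_le_of_lt_liminf_log_mul {x y : ℕ → ℝ} {β c : ℝ} (hx : ∀ᶠ n in atTop, 0 < x n)
    (hc : 0 ≤ c) (h : c < liminf (fun n : ℕ => Real.log n * (β - y n / x n)) atTop) :
    ∀ᶠ n in atTop, y n ≤ (β - c / Real.log n) * x n := by
  filter_upwards [eventually_lt_of_nonneg_lt_liminf hc h, hx, eventually_gt_atTop 1]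
    with n hn hxn hn1
  have hlog : 0 < Real.log n := Real.log_pos (by exact_mod_cast hn1)
  have : c / Real.log n < β - y n / x n := by rwa [div_lt_iff₀' hlog]
  have : y n / x n < β - c / Real.log n := by linarith
  exact ((div_lt_iff₀ hxn).1 this).le

theorem div_log_two_div_le_div_log {c : ℝ} {n k : ℕ} (hc : 0 ≤ c) (hn : 2 ≤ n)
    (hnk : n < 2 ^ (k + 1)) : c / Real.log 2 / (k + 1) ≤ c / Real.log n := by
  have hlog : 0 < Real.log n := Real.log_pos (by exact_mod_cast hn)
  have hle : Real.log n ≤ Real.log 2 * (k + 1) := by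
    calc Real.log n ≤ Real.log ((2 : ℝ) ^ (k + 1)) :=
          Real.log_le_log (by positivity) (by exact_mod_cast hnk.le)
      _ = Real.log 2 * (k + 1) := by rw [Real.log_pow]; push_cast; ring
  rw [div_div]
  exact div_le_div_of_nonneg_left hc hlog hle

theorem one_sub_div_le_div_rpow {θ x : ℝ} (hθ : 1 ≤ θ) (hx : 0 ≤ x) :
    1 - θ / (x + 1) ≤ (x / (x + 1)) ^ θ := by
  have hs : -1 ≤ -(1 / (x + 1)) := by
    rw [neg_le_neg_iff, div_le_one (by linarith)]
    linarith
  have hbern := one_add_mul_self_le_rpow_one_add hs hθ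
  have hx1 : 1 + -(1 / (x + 1)) = x / (x + 1) := by field_simp; ring
  rw [hx1] at hbern
  linarith [show θ * -(1 / (x + 1)) = -(θ / (x + 1)) by ring]

theorem summable_of_succ_le_one_sub_div {S : ℕ → ℝ} {θ : ℝ} (hθ : 1 < θ) (hS : ∀ k, 0 ≤ S k)
    (h : ∀ᶠ k in atTop, S (k + 1) ≤ (1 - θ / ((k : ℝ) + 1)) * S k) : Summable S := by
  obtain ⟨K, hK⟩ := eventually_atTop.1 h
  have hstep : ∀ k ≥ K, S (k + 1) * ((k + 1 : ℕ) : ℝ) ^ θ ≤ S k * (k : ℝ) ^ θ := by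
    intro k hk
    have hk0 : (0 : ℝ) ≤ k := k.cast_nonneg
    calc S (k + 1) * ((k + 1 : ℕ) : ℝ) ^ θ
        ≤ ((k / (k + 1) : ℝ) ^ θ * S k) * ((k : ℝ) + 1) ^ θ := by
          push_cast
          gcongr
          exact (hK k hk).trans
            (mul_le_mul_of_nonneg_right (one_sub_div_le_div_rpow hθ.le hk0) (hS k))
      _ = S k * (k : ℝ) ^ θ := by
          rw [mul_comm _ (S k), mul_assoc, ← Real.mul_rpow (by positivity) (by positivity),
            div_mul_cancel₀ _ (by positivity)]
  set C := S K * (K : ℝ) ^ θ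
  have hbound : ∀ k ≥ max K 1, S k ≤ C * ((k : ℝ) ^ θ)⁻¹ := by
    intro k hk
    have hkpos : (0 : ℝ) < (k : ℝ) ^ θ :=
      Real.rpow_pos_of_pos (by exact_mod_cast (le_of_max_le_right hk)) θ
    rw [← div_eq_mul_inv, le_div_iff₀ hkpos]
    exact antitoneOn_nat_Ici_of_succ_le (f := fun k : ℕ => S k * (k : ℝ) ^ θ) hstep
      (le_refl K) (le_of_max_le_left hk) (le_of_max_le_left hk)
  refine (Real.summable_nat_rpow_inv.2 hθ |>.mul_left C).of_norm_bounded_eventually_nat ?_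
  filter_upwards [eventually_ge_atTop (max K 1)] with k hk
  rw [Real.norm_of_nonneg (hS k)]
  exact hbound k hk

section DyadicBlocks

variable {M : Type*} [AddCommMonoid M]

def dyadicBlockSum (f : ℕ → M) (k : ℕ) : M :=
  ∑ n ∈ Ico (2 ^ k) (2 ^ (k + 1)), f n

theorem Finset.sum_Ico_two_mul (f : ℕ → M) (a b : ℕ) :
    ∑ n ∈ Ico (2 * a) (2 * b), f n = ∑ n ∈ Ico a b, (f (2 * n) + f (2 * n + 1)) := by
  induction b with
  | zero => simp
  | succ b ih =>
    rcases le_or_gt a b with hab | hab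
    · rw [sum_Ico_succ_top hab, ← ih, show 2 * (b + 1) = 2 * b + 1 + 1 by ring,
        sum_Ico_succ_top (by omega), sum_Ico_succ_top (by omega), add_assoc]
    · rw [Ico_eq_empty (by omega), Ico_eq_empty (by omega), sum_empty, sum_empty]

theorem dyadicBlockSum_succ (f : ℕ → M) (k : ℕ) :
    dyadicBlockSum f (k + 1) = ∑ n ∈ Ico (2 ^ k) (2 ^ (k + 1)), (f (2 * n) + f (2 * n + 1)) := by
  rw [dyadicBlockSum, pow_succ' 2 (k + 1), pow_succ' 2 k, Finset.sum_Ico_two_mul]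

theorem sum_range_dyadicBlockSum (f : ℕ → M) (m : ℕ) :
    ∑ k ∈ range m, dyadicBlockSum f k = ∑ n ∈ Ico 1 (2 ^ m), f n := by
  induction m with
  | zero => simp
  | succ m ih =>
    rw [sum_range_succ, ih, dyadicBlockSum,
      sum_Ico_consecutive _ Nat.one_le_two_pow (Nat.pow_le_pow_right two_pos m.le_succ)]

end DyadicBlocks

section DyadicBlocksReal

variable {f : ℕ → ℝ}

theorem dyadicBlockSum_nonneg (hf : ∀ n, 1 ≤ n → 0 ≤ f n) (k : ℕ) : 0 ≤ dyadicBlockSum f k :=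
  sum_nonneg fun n hn => hf n (Nat.one_le_two_pow.trans (mem_Ico.1 hn).1)

theorem dyadicBlockSum_succ_le {r : ℝ} {k : ℕ}
    (h : ∀ n ∈ Ico (2 ^ k) (2 ^ (k + 1)), f (2 * n) + f (2 * n + 1) ≤ r * f n) :
    dyadicBlockSum f (k + 1) ≤ r * dyadicBlockSum f k := by
  rw [dyadicBlockSum_succ, dyadicBlockSum, mul_sum]
  exact sum_le_sum h

theorem eventually_dyadicBlockSum_succ_le {c : ℝ} (hf : ∀ᶠ n in atTop, 0 ≤ f n) (hc : 0 ≤ c)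
    (h : ∀ᶠ n in atTop, f (2 * n) + f (2 * n + 1) ≤ (1 - c / Real.log n) * f n) :
    ∀ᶠ k in atTop, dyadicBlockSum f (k + 1) ≤ (1 - c / Real.log 2 / ((k : ℝ) + 1)) *
      dyadicBlockSum f k := by
  obtain ⟨N, hN⟩ := eventually_atTop.1 (hf.and (h.and (eventually_ge_atTop 2)))
  filter_upwards [(tendsto_pow_atTop_atTop_of_one_lt (one_lt_two : 1 < 2)).eventually_ge_atTop N]
    with k hk
  refine dyadicBlockSum_succ_le fun n hn => ?_
  obtain ⟨hfn, hchildren, h2n⟩ := hN n (hk.trans (mem_Ico.1 hn).1)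
  refine hchildren.trans (mul_le_mul_of_nonneg_right ?_ hfn)
  linarith [div_log_two_div_le_div_log hc h2n (mem_Ico.1 hn).2]

theorem summable_of_summable_dyadicBlockSum (hf : ∀ n, 1 ≤ n → 0 ≤ f n)
    (hS : Summable (dyadicBlockSum f)) : Summable f := by
  refine (summable_nat_add_iff 1).1 <| summable_of_sum_range_le (c := ∑' k, dyadicBlockSum f k)
    (fun n => hf (n + 1) (Nat.le_add_left 1 n)) fun m => ?_
  calc ∑ i ∈ range m, f (i + 1) = ∑ n ∈ Ico 1 (m + 1), f n := by
        rw [range_eq_Ico, sum_Ico_add', zero_add]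
    _ ≤ ∑ n ∈ Ico 1 (2 ^ m), f n :=
        sum_le_sum_of_subset_of_nonneg (Ico_subset_Ico_right Nat.lt_two_pow_self)
          fun n hn _ => hf n (mem_Ico.1 hn).1
    _ = ∑ k ∈ range m, dyadicBlockSum f k := (sum_range_dyadicBlockSum f m).symm
    _ ≤ ∑' k, dyadicBlockSum f k := hS.sum_le_tsum _ fun k _ => dyadicBlockSum_nonneg hf k

end DyadicBlocksReal

theorem second_raabe_convergence (a : ℕ → ℝ)
    (ha : ∀ n, 1 ≤ n → 0 < a n)
    (h1 : Real.log 2 / 2 <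
      Filter.liminf (fun n : ℕ => Real.log n * (1 / 2 - a (2 * n) / a n)) Filter.atTop)
    (h2 : Real.log 2 / 2 <
      Filter.liminf (fun n : ℕ => Real.log n * (1 / 2 - a (2 * n + 1) / a n)) Filter.atTop) :
    Summable a := by
  obtain ⟨c, hc, hc12⟩ := exists_between (lt_min h1 h2)
  have hlog2 : 0 < Real.log 2 := Real.log_pos one_lt_two
  have hc0 : 0 ≤ c := by linarith
  have hpos : ∀ᶠ n in atTop, 0 < a n := eventually_atTop.2 ⟨1, ha⟩
  have hchildren : ∀ᶠ n in atTop,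
      a (2 * n) + a (2 * n + 1) ≤ (1 - 2 * c / Real.log n) * a n := by
    filter_upwards [eventually_le_of_lt_liminf_log_mul hpos hc0 (hc12.trans_le (min_le_left _ _)),
      eventually_le_of_lt_liminf_log_mul hpos hc0 (hc12.trans_le (min_le_right _ _))]
      with n hev hodd
    linarith [show (1 - 2 * c / Real.log n) * a n =
      (1 / 2 - c / Real.log n) * a n + (1 / 2 - c / Real.log n) * a n by ring]
  have hθ : 1 < 2 * c / Real.log 2 := by rw [lt_div_iff₀ hlog2]; linarith
  exact summable_of_summable_dyadicBlockSum (fun n hn => (ha n hn).le)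
    (summable_of_succ_le_one_sub_div hθ (dyadicBlockSum_nonneg fun n hn => (ha n hn).le)
      (eventually_dyadicBlockSum_succ_le (hpos.mono fun _ => le_of_lt) (by positivity) hchildren))
end
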